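/- arXiv:1508.04201 — 2 statements merged into one kernel-verified Lean document; each statement's English description precedes it below -/
import Mathlib

section
/- K_{n_1,…,n_k} has an equitable q-coloring if and only if there exist positive integers q_1,…,q_k with q_1 + ⋯ + q_k = q and q_i·(b-1) ≤ n_i ≤ q_i·b for all i, where b = ⌈(n_1+⋯+n_k)/q⌉. -/
/-- An equitable `q`-coloring of the complete multipartite graph `K_{n_1,…,n_k}`:
a partition into `q` color classes, each contained in one partite set,
with any two class sizes differing by at most one. -/
def EqColoring {k : ℕ} (n : Fin k → ℕ) (q : ℕ) : Prop :=
  ∃ (sz : Fin q → ℕ) (a : Fin q → Fin k),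
    (∀ c c', sz c ≤ sz c' + 1) ∧
    (∀ i, ∑ c ∈ Finset.univ.filter (fun c => a c = i), sz c = n i)

/-- `K_{n_1,…,n_k}` has an equitable `q`-coloring iff there are positive integers
`q_1,…,q_k` with `q_1 + ⋯ + q_k = q` and `q_i·(b-1) ≤ n_i ≤ q_i·b` for all `i`,
where `b = ⌈N/q⌉`. -/
theorem stmt_7 (k : ℕ) (hk : 1 ≤ k) (n : Fin k → ℕ) (hn : ∀ i, 1 ≤ n i)
    (q : ℕ) (hqk : k ≤ q) (hqN : q ≤ ∑ i, n i) :
    EqColoring n q ↔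
      ∃ qi : Fin k → ℕ, (∀ i, 1 ≤ qi i) ∧ (∑ i, qi i) = q ∧
        ∀ i, qi i * ((∑ j, n j + q - 1) / q - 1) ≤ n i ∧
          n i ≤ qi i * ((∑ j, n j + q - 1) / q) := by
  have hq : 0 < q := hk.trans hqk
  set N := ∑ i, n i with hN
  set b := (N + q - 1) / q with hb
  have hN1 : 1 ≤ N := hq.trans_le hqN
  -- basic facts about b
  have hbu : q * b ≤ N + q - 1 := by
    rw [mul_comm]; exact Nat.div_mul_le_self _ _
  have hbl : N ≤ q * b := by
    have h1 := Nat.div_add_mod (N + q - 1) q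
    have h2 := Nat.mod_lt (N + q - 1) hq
    rw [← hb] at h1
    omega
  have hb1 : 1 ≤ b := by
    rw [hb, Nat.one_le_div_iff hq]; omega
  have hqb : q * (b - 1) + q = q * b := by
    have h : q * (b - 1) + q * 1 = q * (b - 1 + 1) := (Nat.mul_add _ _ _).symm
    have hbb : b - 1 + 1 = b := by omega
    rw [hbb, mul_one] at h
    omega
  constructor
  · rintro ⟨sz, a, hdiff, hsum⟩
    have htot : ∑ c, sz c = N := by
      rw [hN, ← Finset.sum_fiberwise Finset.univ a sz]
      exact Finset.sum_congr rfl fun i _ => hsum i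
    -- upper bound on sizes
    have hub : ∀ c, sz c ≤ b := by
      by_contra h
      push_neg at h
      obtain ⟨c0, hc0⟩ := h
      have hall : ∀ c, b ≤ sz c := fun c => by have := hdiff c0 c; omega
      have : ∑ c : Fin q, b < ∑ c, sz c :=
        Finset.sum_lt_sum (fun c _ => hall c) ⟨c0, Finset.mem_univ _, by omega⟩
      simp only [Finset.sum_const, Finset.card_univ, Fintype.card_fin, smul_eq_mul] at this
      omega
    -- lower bound on sizes
    have hlb : ∀ c, b ≤ sz c + 1 := by
      by_contra h
      push_neg at h
      obtain ⟨c0, hc0⟩ := h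
      have hall : ∀ c, sz c ≤ b - 1 := fun c => by have := hdiff c c0; omega
      have : ∑ c, sz c ≤ ∑ c : Fin q, (b - 1) :=
        Finset.sum_le_sum (fun c _ => hall c)
      simp only [Finset.sum_const, Finset.card_univ, Fintype.card_fin, smul_eq_mul] at this
      omega
    refine ⟨fun i => (Finset.univ.filter (fun c => a c = i)).card, ?_, ?_, ?_⟩
    · intro i
      rw [Nat.one_le_iff_ne_zero, Ne, Finset.card_eq_zero]
      intro hemp
      have := hsum i
      rw [hemp, Finset.sum_empty] at this
      have := hn i; omega
    · have := Finset.card_eq_sum_card_fiberwise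
        (s := (Finset.univ : Finset (Fin q))) (t := Finset.univ) (f := a)
        (fun x _ => Finset.mem_univ (a x))
      simpa using this.symm
    · intro i
      constructor
      · have h1 : (Finset.univ.filter (fun c => a c = i)).card • (b - 1) ≤
            ∑ c ∈ Finset.univ.filter (fun c => a c = i), sz c :=
          Finset.card_nsmul_le_sum _ _ _ (fun c _ => by have := hlb c; omega)
        rw [hsum i, smul_eq_mul] at h1
        exact h1
      · have h1 : ∑ c ∈ Finset.univ.filter (fun c => a c = i), sz c ≤
            (Finset.univ.filter (fun c => a c = i)).card • b :=
          Finset.sum_le_card_nsmul _ _ _ (fun c _ => hub c)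
        rw [hsum i, smul_eq_mul] at h1
        exact h1
  · rintro ⟨qi, hqi1, hqisum, hbd⟩
    set r : Fin k → ℕ := fun i => n i - qi i * (b - 1) with hr
    have hrle : ∀ i, r i ≤ qi i := by
      intro i
      have h1 := (hbd i).1
      have h2 := (hbd i).2
      have hm : qi i * (b - 1) + qi i * 1 = qi i * (b - 1 + 1) := (Nat.mul_add _ _ _).symm
      have hbb : b - 1 + 1 = b := by omega
      rw [hbb, mul_one] at hm
      simp only [hr]
      omega
    have e : (Σ i : Fin k, Fin (qi i)) ≃ Fin q :=
      Fintype.equivFinOfCardEq (by simp [hqisum])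
    refine ⟨fun c => b - 1 + (if ((e.symm c).2 : ℕ) < r (e.symm c).1 then 1 else 0),
        fun c => (e.symm c).1, fun c c' => by dsimp only; split_ifs <;> omega, ?_⟩
    intro i
    rw [Finset.sum_filter]
    rw [Equiv.sum_comp e.symm (fun p : Σ i : Fin k, Fin (qi i) =>
      if p.1 = i then b - 1 + (if (p.2 : ℕ) < r p.1 then 1 else 0) else 0)]
    rw [← Finset.univ_sigma_univ, Finset.sum_sigma]
    dsimp only
    have step : ∀ a : Fin k,
        (∑ s : Fin (qi a),
          if a = i then b - 1 + (if (s : ℕ) < r a then 1 else 0) else 0)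
        = if a = i then ∑ s : Fin (qi a), (b - 1 + (if (s : ℕ) < r a then 1 else 0)) else 0 := by
      intro a
      by_cases h : a = i <;> simp [h]
    rw [Finset.sum_congr rfl (fun a _ => step a)]
    rw [Finset.sum_ite_eq' Finset.univ i
      (fun a => ∑ s : Fin (qi a), (b - 1 + (if (s : ℕ) < r a then 1 else 0)))]
    simp only [Finset.mem_univ, if_true]
    rw [Finset.sum_add_distrib, Finset.sum_const, Finset.card_univ, Fintype.card_fin,
      smul_eq_mul]
    have hind : ∑ j : Fin (qi i), (if (j : ℕ) < r i then 1 else 0) = r i := by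
      rw [Fin.sum_univ_eq_sum_range (fun m => if m < r i then (1:ℕ) else 0) (qi i)]
      have hset : (Finset.range (qi i)).filter (fun j => j < r i) = Finset.range (r i) := by
        ext x
        simp only [Finset.mem_filter, Finset.mem_range]
        have := hrle i
        omega
      rw [← Finset.sum_filter (fun j => j < r i) (fun _ => (1 : ℕ)), hset,
        Finset.sum_const, Finset.card_range, smul_eq_mul, mul_one]
    rw [hind]
    have h1 := (hbd i).1
    simp only [hr]
    omega
end

section
/- For the balanced complete k-partite graph K_{k*n} (all partite sets of size n), the minimum d ≥ 1 satisfying condition (i) or (ii) of the threshold definition satisfies: if k ≥ 2, then d is the least positive integer such that d ∤ n or n/⌊n/d⌋ > d+1, and the equitable chromatic threshold equals k·⌈n/d⌉. -/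
open Finset

lemma sum_fin_add_ite_lt (b m t : ℕ) :
    ∑ j : Fin b, (m + if (j : ℕ) < t then 1 else 0) = b * m + min b t := by
  simp [sum_add_distrib, sum_boole, Fin.card_filter_val_lt]

namespace EqColoring

variable {k : ℕ} {n : Fin k → ℕ}

lemma of_sigma (b : Fin k → ℕ) (sz : (Σ i, Fin (b i)) → ℕ) (hsz : ∀ x y, sz x ≤ sz y + 1)
    (hsum : ∀ i, ∑ j, sz ⟨i, j⟩ = n i) : EqColoring n (∑ i, b i) := by
  refine ⟨sz ∘ finSigmaFinEquiv.symm, Sigma.fst ∘ finSigmaFinEquiv.symm, fun _ _ => hsz _ _,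
    fun i => ?_⟩
  rw [sum_filter, ← finSigmaFinEquiv.sum_comp, Fintype.sum_sigma]
  simp [← hsum i]

theorem iff_exists_split (q : ℕ) :
    EqColoring n q ↔
      ∃ m, ∃ b : Fin k → ℕ, ∑ i, b i = q ∧ ∀ i, b i * m ≤ n i ∧ n i ≤ b i * (m + 1) := by
  constructor
  · rintro ⟨sz, a, hsz, hsum⟩
    obtain ⟨m, hm_le, hle_m⟩ : ∃ m, (∀ c, m ≤ sz c) ∧ ∀ c, sz c ≤ m + 1 := by
      rcases isEmpty_or_nonempty (Fin q) with hq | hq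
      · exact ⟨0, isEmptyElim, isEmptyElim⟩
      · obtain ⟨c₀, -, hc₀⟩ := exists_min_image univ sz univ_nonempty
        exact ⟨sz c₀, fun c => hc₀ c (mem_univ c), fun c => hsz c c₀⟩
    refine ⟨m, fun i => #{c | a c = i}, ?_, fun i => ⟨?_, ?_⟩⟩
    · simpa using (card_eq_sum_card_fiberwise (f := a) (s := univ) (t := univ) (by simp)).symm
    · simpa [hsum i] using card_nsmul_le_sum {c | a c = i} sz m fun c _ => hm_le c
    · simpa [hsum i] using sum_le_card_nsmul {c | a c = i} sz (m + 1) fun c _ => hle_m c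
  · rintro ⟨m, b, rfl, hb⟩
    refine of_sigma b (fun x => m + if (x.2 : ℕ) < n x.1 - b x.1 * m then 1 else 0)
      (fun x y => by split_ifs <;> omega) fun i => ?_
    dsimp only
    have := hb i
    rw [Nat.mul_succ] at this
    rw [sum_fin_add_ite_lt]
    omega

end EqColoring

section LeastNonDivisor

variable {n d : ℕ}

lemma Nat.add_sub_one_div_of_not_dvd (hd : 0 < d) (hdn : ¬ d ∣ n) :
    (n + d - 1) / d = n / d + 1 := by
  have hn : n ≠ 0 := by rintro rfl; exact hdn (dvd_zero d)
  obtain ⟨n, rfl⟩ := Nat.exists_eq_succ_of_ne_zero hn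
  rw [Nat.succ_div_of_not_dvd hdn, Nat.succ_add_sub_one, Nat.add_div_right n hd]

lemma div_lt_of_le_mul_succ (hdn : ¬ d ∣ n) {b m : ℕ} (hm : m < d) (h : n ≤ b * (m + 1)) :
    n / d < b := by
  by_contra! hb
  have : n / d * d = n := (Nat.div_mul_le_self n d).antisymm (h.trans (Nat.mul_le_mul hb hm))
  exact hdn (Dvd.intro_left _ this)

lemma exists_split_of_div_lt (hd : 0 < d) (hmin : ∀ e, 0 < e → e < d → e ∣ n) {q : ℕ}
    (hq : n / d < q) : ∃ m, (q + 1) * m ≤ n ∧ n ≤ q * (m + 1) := by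
  set m := n / (q + 1)
  have hn_lt : n < (q + 1) * (m + 1) := Nat.lt_mul_div_succ n q.succ_pos
  have hmd : m < d := by
    by_contra! hdm
    have : (q + 1) * d < d * q :=
      calc (q + 1) * d ≤ (q + 1) * m := Nat.mul_le_mul_left _ hdm
        _ ≤ n := Nat.mul_div_le n (q + 1)
        _ < d * (n / d + 1) := Nat.lt_mul_div_succ n hd
        _ ≤ d * q := Nat.mul_le_mul_left d hq
    nlinarith
  refine ⟨m, Nat.mul_div_le n (q + 1), ?_⟩
  rcases (Nat.succ_le_of_lt hmd).lt_or_eq with hlt | heq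
  · obtain ⟨t, ht⟩ := hmin (m + 1) m.succ_pos hlt
    have htq : t < q + 1 := Nat.lt_of_mul_lt_mul_left (a := m + 1) (by rwa [← ht, mul_comm])
    rw [ht, mul_comm]
    exact Nat.mul_le_mul_right _ (Nat.le_of_lt_succ htq)
  · calc n ≤ d * q := (Nat.lt_mul_div_succ n hd).le.trans (Nat.mul_le_mul_left d hq)
      _ = q * (m + 1) := by rw [← heq, mul_comm]

theorem eqColoring_const_of_le {k r : ℕ} (hk : 0 < k) (hd : 0 < d)
    (hmin : ∀ e, 0 < e → e < d → e ∣ n) (hr : k * (n / d + 1) ≤ r) :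
    EqColoring (fun _ : Fin k => n) r := by
  obtain ⟨q, s, hs, rfl⟩ : ∃ q s, s < k ∧ r = k * q + s :=
    ⟨r / k, r % k, Nat.mod_lt r hk, (Nat.div_add_mod r k).symm⟩
  have hq : n / d < q := by
    by_contra! hq
    nlinarith
  obtain ⟨m, h_lo, h_hi⟩ := exists_split_of_div_lt hd hmin hq
  refine (EqColoring.iff_exists_split _).2
    ⟨m, fun i => q + if (i : ℕ) < s then 1 else 0, ?_, fun i => ⟨?_, ?_⟩⟩
  · simp [sum_add_distrib, sum_boole, Fin.card_filter_val_lt, hs.le]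
  · exact (Nat.mul_le_mul_right m (by dsimp only; split_ifs <;> omega)).trans h_lo
  · exact h_hi.trans (Nat.mul_le_mul_right _ (Nat.le_add_right _ _))

theorem not_eqColoring_const_sub_one {k : ℕ} (hk : 2 ≤ k) (hd : 0 < d) (hdn : ¬ d ∣ n) :
    ¬ EqColoring (fun _ : Fin k => n) (k * (n / d + 1) - 1) := by
  rw [EqColoring.iff_exists_split]
  rintro ⟨m, b, hsum, hb⟩
  rcases lt_or_ge m d with hm | hm
  · have : k * (n / d + 1) ≤ ∑ i, b i := by
      simpa using card_nsmul_le_sum univ b (n / d + 1) fun i _ =>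
        div_lt_of_le_mul_succ hdn hm (hb i).2
    have : 0 < k * (n / d + 1) := by positivity
    omega
  · have : ∑ i, b i ≤ k * (n / d) := by
      simpa using sum_le_card_nsmul univ b (n / d) fun i _ =>
        (Nat.le_div_iff_mul_le hd).2 ((Nat.mul_le_mul_left _ hm).trans (hb i).1)
    rw [Nat.mul_succ] at hsum
    omega

theorem isLeast_eqColoring_const {k : ℕ} (hk : 2 ≤ k) (hd : 0 < d) (hdn : ¬ d ∣ n)
    (hmin : ∀ e, 0 < e → e < d → e ∣ n) :
    IsLeast {p | ∀ r, p ≤ r → EqColoring (fun _ : Fin k => n) r} (k * (n / d + 1)) := by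
  refine ⟨fun r => eqColoring_const_of_le (by omega) hd hmin, fun p hp => ?_⟩
  by_contra! hlt
  exact not_eqColoring_const_sub_one hk hd hdn (hp _ (Nat.le_sub_one_of_lt hlt))

end LeastNonDivisor

lemma not_add_one_lt_div_div_of_dvd {n d : ℕ} (hdn : d ∣ n) :
    ¬ (d : ℚ) + 1 < (n : ℚ) / ((n / d : ℕ) : ℚ) := by
  rcases eq_or_ne n 0 with rfl | hn
  · simp; positivity
  have hd : d ≠ 0 := by rintro rfl; simp_all
  rw [Nat.cast_div hdn (by exact_mod_cast hd), div_div_cancel₀ (by exact_mod_cast hn)]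
  linarith

/-- For the balanced complete `k`-partite graph `K_{k*n}` with `k ≥ 2`:
the minimum `d ≥ 1` satisfying condition (i) or (ii) of the threshold definition
is the least positive `d` with `d ∤ n` or `n/⌊n/d⌋ > d+1`, and the equitable
chromatic threshold equals `k·⌈n/d⌉`. -/
theorem stmt_17 (k n : ℕ) (hk : 2 ≤ k) (hn : 1 ≤ n) :
    sInf {d : ℕ | 1 ≤ d ∧
        ((∃ i j : Fin k, i ≠ j ∧ ¬ d ∣ n ∧ ¬ d ∣ n) ∨
         (d : ℚ) + 1 < (n : ℚ) / ((n / d : ℕ) : ℚ))} =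
      sInf {d : ℕ | 1 ≤ d ∧ (¬ d ∣ n ∨ (d : ℚ) + 1 < (n : ℚ) / ((n / d : ℕ) : ℚ))} ∧
    IsLeast {p : ℕ | ∀ r, p ≤ r → EqColoring (fun _ : Fin k => n) r}
      (k * ((n + sInf {d : ℕ | 1 ≤ d ∧
          (¬ d ∣ n ∨ (d : ℚ) + 1 < (n : ℚ) / ((n / d : ℕ) : ℚ))} - 1) /
        sInf {d : ℕ | 1 ≤ d ∧
          (¬ d ∣ n ∨ (d : ℚ) + 1 < (n : ℚ) / ((n / d : ℕ) : ℚ))})) := by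
  obtain ⟨i, j, hij⟩ : ∃ i j : Fin k, i ≠ j := ⟨⟨0, by omega⟩, ⟨1, by omega⟩, by simp⟩
  refine ⟨congrArg sInf (Set.ext fun d => and_congr_right fun _ => or_congr_left
    ⟨fun ⟨_, _, _, h, _⟩ => h, fun h => ⟨i, j, hij, h, h⟩⟩), ?_⟩
  have h_set : {d : ℕ | 1 ≤ d ∧ (¬ d ∣ n ∨ (d : ℚ) + 1 < (n : ℚ) / ((n / d : ℕ) : ℚ))} =
      {d | 1 ≤ d ∧ ¬ d ∣ n} :=
    Set.ext fun d => and_congr_right fun _ =>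
      or_iff_left_of_imp fun h hdvd => not_add_one_lt_div_div_of_dvd hdvd h
  rw [h_set]
  have h_nonempty : {d : ℕ | 1 ≤ d ∧ ¬ d ∣ n}.Nonempty :=
    ⟨n + 1, by omega, fun h => by have := Nat.le_of_dvd (by omega) h; omega⟩
  set d := sInf {d : ℕ | 1 ≤ d ∧ ¬ d ∣ n}
  obtain ⟨hd, hdn⟩ : 1 ≤ d ∧ ¬ d ∣ n := Nat.sInf_mem h_nonempty
  have hmin : ∀ e, 0 < e → e < d → e ∣ n := fun e he hlt =>
    not_not.1 fun h => Nat.notMem_of_lt_sInf hlt ⟨he, h⟩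
  rw [Nat.add_sub_one_div_of_not_dvd hd hdn]
  exact isLeast_eqColoring_const hk hd hdn hmin
end
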